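/- Let f ∈ Hol(𝔻,𝔻) with β_f(σ) < +∞ at some σ ∈ ∂𝔻. Then β_f(σ) ≥ (2/(1+|f^h(0)|)) · |f(σ)-f(0)|²/(1-|f(0)|²) ≥ (2/(1+|f^h(0)|)) · (1-|f(0)|)/(1+|f(0)|), where f^h(0) = f'(0)(1-|0|²)/(1-|f(0)|²) = f'(0)/(1-|f(0)|²) is the hyperbolic derivative at 0. -/

import Mathlib

open Complex Filter Set Metric Finset

noncomputable section

/-- `f` is a holomorphic self-map of the open unit disk. -/
def HolSelfDisk (f : ℂ → ℂ) : Prop :=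
  DifferentiableOn ℂ f (Metric.ball (0:ℂ) 1) ∧
    Set.MapsTo f (Metric.ball (0:ℂ) 1) (Metric.ball (0:ℂ) 1)

/-- `B` is a finite Blaschke product of degree `d` (as a function on the unit disk). -/
def IsBlaschke (d : ℕ) (B : ℂ → ℂ) : Prop :=
  ∃ (θ : ℝ) (a : Fin d → ℂ), (∀ j, ‖a j‖ < 1) ∧
    ∀ z ∈ Metric.ball (0:ℂ) 1,
      B z = Complex.exp (θ * Complex.I) *
        ∏ j, (z - a j) / (1 - (starRingEnd ℂ) (a j) * z)

/-- The hyperbolic difference quotient `f*(z,w)`. -/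
def hdq (f : ℂ → ℂ) (w : ℂ) (z : ℂ) : ℂ :=
  if z = w then
    deriv f z * ((1 - ‖z‖ ^ 2 : ℝ) : ℂ) / ((1 - ‖f z‖ ^ 2 : ℝ) : ℂ)
  else
    ((f z - f w) / (1 - (starRingEnd ℂ) (f w) * f z)) /
      ((z - w) / (1 - (starRingEnd ℂ) w * z))

/-- Iterated hyperbolic difference quotient: `iterHdq f w h = Δ_{w (h-1), …, w 0} f`. -/
def iterHdq (f : ℂ → ℂ) (w : ℕ → ℂ) : ℕ → ℂ → ℂ
  | 0 => f
  | h + 1 => hdq (iterHdq f w h) (w h)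

/-- The Stolz region of vertex `σ` and amplitude `M`. -/
def Stolz (σ : ℂ) (M : ℝ) : Set ℂ :=
  {z : ℂ | ‖z‖ < 1 ∧ ‖σ - z‖ / (1 - ‖z‖) < M}

/-- `f` has non-tangential limit `c` at `σ`. -/
def NTLim (f : ℂ → ℂ) (σ c : ℂ) : Prop :=
  ∀ M : ℝ, 1 < M → Filter.Tendsto f (nhdsWithin σ (Stolz σ M)) (nhds c)

/-- The boundary dilation coefficient, as an extended real number. -/
def betaE (f : ℂ → ℂ) (σ : ℂ) : EReal :=
  Filter.liminf
    (fun z => (((1 - ‖f z‖) / (1 - ‖z‖) : ℝ) : EReal))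
    (nhdsWithin σ (Metric.ball (0:ℂ) 1))

/-!
Normalise by the disk automorphism `T_a`, `a = f 0`, and write `T_a (f z) = z g(z)` with
`g = f*(·, 0)`; then `|g| ≤ 1` and `|g 0| = |f^h(0)| =: c`. Schwarz–Pick for `g` bounds
`|g z| ≤ (c + |z|) / (1 + c|z|)`, which turns into the pointwise estimate
`(1 - |f z|²) / (1 - |z|²) ≥ (1 + 2c|z| + |z|²) / (1 + c|z|)² · |1 - ā f(z)|² / (1 - |a|²)`,
whose first factor tends to `2 / (1 + c)` as `|z| → 1`. Evaluate it along `z_n → σ` realising the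
liminf `β`. To see `f(z_n) → f(σ)`, take a limit point `η` of `f(z_n)`: the limit of Schwarz–Pick
is Julia's inequality at `σ` with image point `η`, which along the radius forces `f(rσ) → η`,
so `η = f(σ)`.
-/

open ComplexConjugate Topology

theorem conj_mul_self_of_norm_eq_one {z : ℂ} (hz : ‖z‖ = 1) : conj z * z = 1 := by
  rw [conj_mul', hz, ofReal_one, one_pow]

theorem one_sub_conj_mul_ne_zero {w z : ℂ} (hw : ‖w‖ < 1) (hz : ‖z‖ ≤ 1) :
    1 - conj w * z ≠ 0 := by
  rw [sub_ne_zero]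
  intro h
  have := congrArg norm h
  rw [norm_one, norm_mul, norm_conj] at this
  nlinarith [norm_nonneg w, norm_nonneg z]

theorem norm_one_sub_conj_mul_sq_sub_norm_sub_sq (w z : ℂ) :
    ‖1 - conj w * z‖ ^ 2 - ‖z - w‖ ^ 2 = (1 - ‖w‖ ^ 2) * (1 - ‖z‖ ^ 2) := by
  simp only [Complex.sq_norm, normSq_apply, sub_re, sub_im, mul_re, mul_im, one_re, one_im,
    conj_re, conj_im]
  ring

theorem norm_one_sub_conj_mul_of_norm_eq_one (a : ℂ) {b : ℂ} (hb : ‖b‖ = 1) :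
    ‖1 - conj a * b‖ = ‖b - a‖ := by
  rw [← conj_mul_self_of_norm_eq_one hb, ← sub_mul, ← map_sub, norm_mul, norm_conj, hb, mul_one]

def moebius (w z : ℂ) : ℂ := (z - w) / (1 - conj w * z)

theorem one_sub_norm_moebius_sq {w z : ℂ} (hw : ‖w‖ < 1) (hz : ‖z‖ ≤ 1) :
    1 - ‖moebius w z‖ ^ 2 = (1 - ‖w‖ ^ 2) * (1 - ‖z‖ ^ 2) / ‖1 - conj w * z‖ ^ 2 := by
  have hD : ‖1 - conj w * z‖ ^ 2 ≠ 0 := by simpa using one_sub_conj_mul_ne_zero hw hz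
  rw [moebius, norm_div, div_pow, eq_div_iff hD, sub_mul, div_mul_cancel₀ _ hD, one_mul,
    norm_one_sub_conj_mul_sq_sub_norm_sub_sq]

theorem norm_moebius_lt_one {w z : ℂ} (hw : ‖w‖ < 1) (hz : ‖z‖ < 1) : ‖moebius w z‖ < 1 := by
  have h := one_sub_norm_moebius_sq hw hz.le
  have hpos : 0 < (1 - ‖w‖ ^ 2) * (1 - ‖z‖ ^ 2) / ‖1 - conj w * z‖ ^ 2 := by
    have := one_sub_conj_mul_ne_zero hw hz.le
    have : 0 < 1 - ‖w‖ ^ 2 := by nlinarith [norm_nonneg w]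
    have : 0 < 1 - ‖z‖ ^ 2 := by nlinarith [norm_nonneg z]
    positivity
  nlinarith [norm_nonneg (moebius w z)]

theorem mapsTo_moebius {w : ℂ} (hw : ‖w‖ < 1) : MapsTo (moebius w) (ball 0 1) (ball 0 1) :=
  fun z hz => by
    rw [mem_ball_zero_iff] at hz ⊢
    exact norm_moebius_lt_one hw hz

theorem differentiableOn_moebius {w : ℂ} (hw : ‖w‖ < 1) :
    DifferentiableOn ℂ (moebius w) (ball 0 1) := fun _ hz =>
  ((differentiableAt_id.sub_const w).div ((differentiableAt_id.const_mul _).const_sub 1)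
    (one_sub_conj_mul_ne_zero hw (mem_ball_zero_iff.1 hz).le)).differentiableWithinAt

theorem moebius_neg_moebius {w z : ℂ} (hw : ‖w‖ < 1) (hz : ‖z‖ < 1) :
    moebius (-w) (moebius w z) = z := by
  have hz' := one_sub_conj_mul_ne_zero hw hz.le
  have hden : 1 - conj (-w) * moebius w z = (1 - conj w * w) / (1 - conj w * z) := by
    rw [moebius, map_neg]
    field_simp
    ring
  replace hz' : 1 - z * conj w ≠ 0 := mul_comm z (conj w) ▸ hz'
  have hw' : 1 - w * conj w ≠ 0 := mul_comm w (conj w) ▸ one_sub_conj_mul_ne_zero hw hw.le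
  rw [moebius, hden, moebius]
  field_simp
  ring

theorem HolSelfDisk.norm_lt_one {f : ℂ → ℂ} (hf : HolSelfDisk f) {z : ℂ} (hz : ‖z‖ < 1) :
    ‖f z‖ < 1 :=
  mem_ball_zero_iff.1 (hf.2 (mem_ball_zero_iff.2 hz))

theorem HolSelfDisk.differentiableAt {f : ℂ → ℂ} (hf : HolSelfDisk f) {z : ℂ} (hz : ‖z‖ < 1) :
    DifferentiableAt ℂ f z :=
  hf.1.differentiableAt (isOpen_ball.mem_nhds (mem_ball_zero_iff.2 hz))

theorem HolSelfDisk.moebius_comp {f : ℂ → ℂ} (hf : HolSelfDisk f) {w : ℂ} (hw : ‖w‖ < 1) :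
    HolSelfDisk (fun z => moebius w (f z)) :=
  ⟨(differentiableOn_moebius hw).comp hf.1 hf.2, (mapsTo_moebius hw).comp hf.2⟩

theorem schwarz_pick {f : ℂ → ℂ} (hf : HolSelfDisk f) {w z : ℂ} (hw : ‖w‖ < 1) (hz : ‖z‖ < 1) :
    ‖moebius (f w) (f z)‖ ≤ ‖moebius w z‖ := by
  have hnw : ‖-w‖ < 1 := by rwa [norm_neg]
  have hT := hf.moebius_comp (hf.norm_lt_one hw)
  have hG0 : ((fun z => moebius (f w) (f z)) ∘ moebius (-w)) 0 = 0 := by simp [moebius]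
  simpa [moebius_neg_moebius hw hz] using
    norm_le_norm_of_mapsTo_ball (hT.1.comp (differentiableOn_moebius hnw) (mapsTo_moebius hnw))
      ((hT.2.comp (mapsTo_moebius hnw)).mono_right ball_subset_closedBall) hG0
      (norm_moebius_lt_one hw hz)

theorem schwarz_pick_quotient {f : ℂ → ℂ} (hf : HolSelfDisk f) {w z : ℂ} (hw : ‖w‖ < 1)
    (hz : ‖z‖ < 1) :
    (1 - ‖z‖ ^ 2) * ‖1 - conj (f w) * f z‖ ^ 2
      ≤ (1 - ‖f z‖ ^ 2) * ((1 - ‖f w‖ ^ 2) / (1 - ‖w‖ ^ 2)) * ‖1 - conj w * z‖ ^ 2 := by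
  have hfw := hf.norm_lt_one hw
  have hfz := hf.norm_lt_one hz
  have hsp : 1 - ‖moebius w z‖ ^ 2 ≤ 1 - ‖moebius (f w) (f z)‖ ^ 2 := by
    gcongr
    exact schwarz_pick hf hw hz
  rw [one_sub_norm_moebius_sq hw hz.le, one_sub_norm_moebius_sq hfw hfz.le,
    div_le_div_iff₀ (pow_pos (norm_pos_iff.2 (one_sub_conj_mul_ne_zero hw hz.le)) 2)
      (pow_pos (norm_pos_iff.2 (one_sub_conj_mul_ne_zero hfw hfz.le)) 2)] at hsp
  have hw2 : 0 < 1 - ‖w‖ ^ 2 := by nlinarith [norm_nonneg w]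
  rw [mul_div_assoc', div_mul_eq_mul_div, le_div_iff₀ hw2]
  linarith

theorem norm_sub_norm_le_norm_moebius_mul {u v : ℂ} (hu : ‖u‖ < 1) (hv : ‖v‖ < 1) :
    ‖u‖ - ‖v‖ ≤ ‖moebius v u‖ * (1 - ‖u‖ * ‖v‖) := by
  have hD : 0 < ‖1 - conj v * u‖ := norm_pos_iff.2 (one_sub_conj_mul_ne_zero hv hu.le)
  have hsc : 0 ≤ 1 - ‖u‖ * ‖v‖ := by nlinarith [norm_nonneg u, norm_nonneg v]
  rcases le_or_gt ‖u‖ ‖v‖ with h | h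
  · exact (sub_nonpos.2 h).trans (by positivity)
  rw [moebius, norm_div, div_mul_eq_mul_div, le_div_iff₀ hD]
  have hdiff : ‖u‖ - ‖v‖ ≤ ‖u - v‖ := norm_sub_norm_le u v
  have hid := norm_one_sub_conj_mul_sq_sub_norm_sub_sq v u
  -- `‖1 - v̄u‖²` and `(1 - ‖u‖‖v‖)²` exceed `‖u - v‖²` and `(‖u‖ - ‖v‖)²` respectively
  -- by the same amount `(1 - ‖u‖²)(1 - ‖v‖²)`
  have hsq : ((‖u‖ - ‖v‖) * ‖1 - conj v * u‖) ^ 2 ≤ (‖u - v‖ * (1 - ‖u‖ * ‖v‖)) ^ 2 := by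
    have h1 : (‖u‖ - ‖v‖) ^ 2 ≤ ‖u - v‖ ^ 2 := pow_le_pow_left₀ (by linarith) hdiff 2
    have h2 : 0 ≤ (1 - ‖u‖ ^ 2) * (1 - ‖v‖ ^ 2) :=
      mul_nonneg (by nlinarith [norm_nonneg u]) (by nlinarith [norm_nonneg v])
    nlinarith [mul_le_mul_of_nonneg_right h1 h2]
  exact (pow_le_pow_iff_left₀ (mul_nonneg (by linarith) hD.le) (by positivity) two_ne_zero).1 hsq

theorem schwarz_pick_zero_of_mapsTo_closedBall {g : ℂ → ℂ}
    (hd : DifferentiableOn ℂ g (ball 0 1)) (hm : MapsTo g (ball 0 1) (closedBall 0 1))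
    {z : ℂ} (hz : ‖z‖ < 1) :
    ‖g z‖ * (1 + ‖g 0‖ * ‖z‖) ≤ ‖g 0‖ + ‖z‖ := by
  have h0 : (0 : ℂ) ∈ ball 0 1 := mem_ball_self one_pos
  have hzb : z ∈ ball 0 1 := mem_ball_zero_iff.2 hz
  by_cases hopen : MapsTo g (ball 0 1) (ball 0 1)
  · have hg0 : ‖g 0‖ < 1 := mem_ball_zero_iff.1 (hopen h0)
    have hgz : ‖g z‖ < 1 := mem_ball_zero_iff.1 (hopen hzb)
    have hsub := norm_sub_norm_le_norm_moebius_mul hgz hg0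
    have hsp := schwarz_pick ⟨hd, hopen⟩ (w := 0) (by simp) hz
    rw [show moebius 0 z = z by simp [moebius]] at hsp
    nlinarith [mul_le_mul_of_nonneg_right hsp
      (by nlinarith [norm_nonneg (g z), norm_nonneg (g 0)] : 0 ≤ 1 - ‖g z‖ * ‖g 0‖)]
  -- otherwise `‖g‖` attains its maximum `1` inside the disk, so `g` is a unimodular constant
  obtain ⟨x, hx, hgx⟩ := not_forall₂.1 hopen
  have hgx1 : ‖g x‖ = 1 := le_antisymm (mem_closedBall_zero_iff.1 (hm hx))
    (not_lt.1 (fun h => hgx (mem_ball_zero_iff.2 h)))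
  have hmax : IsMaxOn (norm ∘ g) (ball 0 1) x := fun y hy => by
    simpa [hgx1] using mem_closedBall_zero_iff.1 (hm hy)
  have hconst := Complex.eqOn_of_isPreconnected_of_isMaxOn_norm
    (convex_ball (0 : ℂ) 1).isPreconnected isOpen_ball hd hx hmax
  rw [hconst hzb, hconst h0]
  simp [hgx1]

theorem hdq_zero_eq_dslope {f : ℂ → ℂ} (hf : DifferentiableAt ℂ f 0) (ha : ‖f 0‖ < 1) :
    hdq f 0 = dslope (fun z => moebius (f 0) (f z)) 0 := by
  funext z
  rcases eq_or_ne z 0 with rfl | hz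
  · have hne := one_sub_conj_mul_ne_zero ha ha.le
    have hF : deriv (fun z => moebius (f 0) (f z)) 0 = deriv f 0 / (1 - conj (f 0) * f 0) := by
      simp only [moebius]
      rw [((hf.hasDerivAt.sub_const (f 0)).fun_div
        ((hf.hasDerivAt.const_mul (conj (f 0))).const_sub 1) hne).deriv]
      field_simp
      ring
    have hcast : ((1 - ‖f 0‖ ^ 2 : ℝ) : ℂ) = 1 - conj (f 0) * f 0 := by
      rw [ofReal_sub, ofReal_one, ← normSq_eq_norm_sq, ← mul_conj, mul_comm]
    rw [dslope_same, hF, hdq, if_pos rfl, hcast]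
    simp
  · rw [dslope_of_ne _ hz, slope_def_field, hdq, if_neg hz]
    simp [moebius]

theorem moebius_eq_mul_hdq_zero {f : ℂ → ℂ} (hf : DifferentiableAt ℂ f 0) (ha : ‖f 0‖ < 1)
    (z : ℂ) : moebius (f 0) (f z) = z * hdq f 0 z := by
  simpa [hdq_zero_eq_dslope hf ha, moebius] using
    (sub_smul_dslope (fun z => moebius (f 0) (f z)) 0 z).symm

theorem differentiableOn_hdq_zero {f : ℂ → ℂ} (hf : HolSelfDisk f) :
    DifferentiableOn ℂ (hdq f 0) (ball 0 1) := by
  have ha := hf.norm_lt_one (z := 0) (by simp)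
  rw [hdq_zero_eq_dslope (hf.differentiableAt (by simp)) ha]
  exact (differentiableOn_dslope (isOpen_ball.mem_nhds (mem_ball_self one_pos))).2
    (hf.moebius_comp ha).1

theorem mapsTo_hdq_zero {f : ℂ → ℂ} (hf : HolSelfDisk f) :
    MapsTo (hdq f 0) (ball 0 1) (closedBall 0 1) := fun z hz => by
  have ha := hf.norm_lt_one (z := 0) (by simp)
  have hF := hf.moebius_comp ha
  rw [hdq_zero_eq_dslope (hf.differentiableAt (by simp)) ha, mem_closedBall_zero_iff]
  simpa using norm_dslope_le_div_of_mapsTo_ball hF.1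
    (by simpa [moebius] using hF.2.mono_right ball_subset_closedBall) hz

theorem dilation_lower_bound {f : ℂ → ℂ} (hf : HolSelfDisk f) {z : ℂ} (hz : ‖z‖ < 1) :
    (1 + 2 * ‖hdq f 0 0‖ * ‖z‖ + ‖z‖ ^ 2) / (1 + ‖hdq f 0 0‖ * ‖z‖) ^ 2
        * (‖1 - conj (f 0) * f z‖ ^ 2 / (1 - ‖f 0‖ ^ 2))
      ≤ (1 - ‖f z‖ ^ 2) / (1 - ‖z‖ ^ 2) := by
  have ha := hf.norm_lt_one (z := 0) (by simp)
  have hfz := hf.norm_lt_one hz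
  set c := ‖hdq f 0 0‖
  set r := ‖z‖
  set m := ‖hdq f 0 z‖
  set t := ‖1 - conj (f 0) * f z‖
  have hr0 : 0 ≤ r := norm_nonneg _
  have ha2 : 0 < 1 - ‖f 0‖ ^ 2 := by nlinarith [norm_nonneg (f 0)]
  have hr2 : 0 < 1 - r ^ 2 := by nlinarith
  have hm : m * (1 + c * r) ≤ c + r :=
    schwarz_pick_zero_of_mapsTo_closedBall (differentiableOn_hdq_zero hf) (mapsTo_hdq_zero hf) hz
  have hid : 1 - (r * m) ^ 2 = (1 - ‖f 0‖ ^ 2) * (1 - ‖f z‖ ^ 2) / t ^ 2 := by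
    rw [← one_sub_norm_moebius_sq ha hfz.le,
      moebius_eq_mul_hdq_zero (hf.differentiableAt (by simp)) ha, norm_mul]
  have ht : t ≠ 0 := norm_ne_zero_iff.2 (one_sub_conj_mul_ne_zero ha hfz.le)
  -- `(1 + c r)² - r² (c + r)² = (1 - r²) (1 + 2 c r + r²)`
  have hpoly : (1 + 2 * c * r + r ^ 2) * (1 - r ^ 2) ≤ (1 - (r * m) ^ 2) * (1 + c * r) ^ 2 := by
    have h : (r * m * (1 + c * r)) ^ 2 ≤ (r * (c + r)) ^ 2 :=
      pow_le_pow_left₀ (by positivity) (by rw [mul_assoc]; exact mul_le_mul_of_nonneg_left hm hr0) 2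
    nlinarith [h]
  calc (1 + 2 * c * r + r ^ 2) / (1 + c * r) ^ 2 * (t ^ 2 / (1 - ‖f 0‖ ^ 2))
      ≤ (1 - (r * m) ^ 2) / (1 - r ^ 2) * (t ^ 2 / (1 - ‖f 0‖ ^ 2)) := by
        gcongr ?_ * _
        rw [div_le_div_iff₀ (by positivity) hr2]
        linarith
    _ = (1 - ‖f z‖ ^ 2) / (1 - r ^ 2) := by
        rw [hid]
        field_simp

theorem exists_seq_tendsto_of_liminf_coe_eq {α : Type*} {l : Filter α} [l.NeBot]
    [l.IsCountablyGenerated] {u : α → ℝ} {b : ℝ} (h : liminf (fun x => (u x : EReal)) l = b) :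
    ∃ x : ℕ → α, Tendsto x atTop l ∧ Tendsto (u ∘ x) atTop (𝓝 b) := by
  obtain ⟨x, hux, hx⟩ := exists_seq_tendsto_liminf (f := l) (u := fun x => (u x : EReal))
  rw [h] at hux
  exact ⟨x, hx, EReal.tendsto_coe.1 hux⟩

theorem tendsto_one_sub_sq_div_one_sub_sq {ι : Type*} {l : Filter ι} {r s : ι → ℝ} {β : ℝ}
    (hr : Tendsto r l (𝓝 1)) (hr1 : ∀ᶠ i in l, r i < 1)
    (hq : Tendsto (fun i => (1 - s i) / (1 - r i)) l (𝓝 β)) :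
    Tendsto (fun i => (1 - s i ^ 2) / (1 - r i ^ 2)) l (𝓝 β) := by
  have hr0 : ∀ᶠ i in l, 0 < r i := hr.eventually (lt_mem_nhds one_pos)
  have hs : Tendsto s l (𝓝 1) := by
    have h : Tendsto (fun i => 1 - (1 - s i) / (1 - r i) * (1 - r i)) l
        (𝓝 (1 - β * (1 - 1))) := tendsto_const_nhds.sub (hq.mul (tendsto_const_nhds.sub hr))
    rw [sub_self, mul_zero, sub_zero] at h
    refine h.congr' (hr1.mono fun i hi => ?_)
    field_simp [(sub_pos.2 hi).ne']
    ring
  have h : Tendsto (fun i => (1 - s i) / (1 - r i) * ((1 + s i) / (1 + r i))) l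
      (𝓝 (β * ((1 + 1) / (1 + 1)))) :=
    hq.mul ((tendsto_const_nhds.add hs).div (tendsto_const_nhds.add hr) (by norm_num))
  rw [show β * ((1 + 1) / (1 + 1)) = β by norm_num] at h
  refine h.congr' ((hr1.and hr0).mono fun i hi => ?_)
  have h1 : 1 - r i ≠ 0 := (sub_pos.2 hi.1).ne'
  have h2 : 1 + r i ≠ 0 := by linarith [hi.2]
  have h3 : 1 - r i ^ 2 ≠ 0 := by nlinarith [hi.1, hi.2]
  field_simp
  ring

theorem exists_seq_of_betaE_eq {f : ℂ → ℂ} (hf : HolSelfDisk f) {σ : ℂ} (hσ : ‖σ‖ = 1)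
    {β : ℝ} (hβ : betaE f σ = β) :
    ∃ (w : ℕ → ℂ) (η : ℂ), Tendsto w atTop (𝓝[ball 0 1] σ) ∧ Tendsto (f ∘ w) atTop (𝓝 η) ∧
      Tendsto (fun n => (1 - ‖f (w n)‖ ^ 2) / (1 - ‖w n‖ ^ 2)) atTop (𝓝 β) := by
  have : (𝓝[ball (0 : ℂ) 1] σ).NeBot := mem_closure_iff_nhdsWithin_neBot.1 (by
    rw [closure_ball 0 one_ne_zero, mem_closedBall_zero_iff, hσ])
  obtain ⟨z, hz, hq⟩ := exists_seq_tendsto_of_liminf_coe_eq hβ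
  have hzball : ∀ᶠ n in atTop, z n ∈ ball 0 1 := hz.eventually self_mem_nhdsWithin
  have hnorm : Tendsto (fun n => ‖z n‖) atTop (𝓝 1) := by
    simpa [hσ] using (hz.mono_right nhdsWithin_le_nhds).norm
  have hQ := tendsto_one_sub_sq_div_one_sub_sq hnorm
    (hzball.mono fun _ hn => mem_ball_zero_iff.1 hn) hq
  obtain ⟨η, -, φ, hφ, hη⟩ := (isCompact_closedBall (0 : ℂ) 1).tendsto_subseq'
    (hzball.frequently.mono fun _ hn => ball_subset_closedBall (hf.2 hn))
  exact ⟨z ∘ φ, η, hz.comp hφ.tendsto_atTop, hη, hQ.comp hφ.tendsto_atTop⟩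

theorem julia_inequality {f : ℂ → ℂ} (hf : HolSelfDisk f) {w : ℕ → ℂ} {σ η : ℂ} {β : ℝ}
    (hw : Tendsto w atTop (𝓝[ball 0 1] σ)) (hfw : Tendsto (f ∘ w) atTop (𝓝 η))
    (hQ : Tendsto (fun n => (1 - ‖f (w n)‖ ^ 2) / (1 - ‖w n‖ ^ 2)) atTop (𝓝 β))
    {z : ℂ} (hz : ‖z‖ < 1) :
    (1 - ‖z‖ ^ 2) * ‖1 - conj η * f z‖ ^ 2 ≤ (1 - ‖f z‖ ^ 2) * β * ‖1 - conj σ * z‖ ^ 2 :=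
  le_of_tendsto_of_tendsto
    (((by fun_prop : Continuous fun v : ℂ => (1 - ‖z‖ ^ 2) * ‖1 - conj v * f z‖ ^ 2).tendsto
      η).comp hfw)
    ((tendsto_const_nhds.mul hQ).mul
      (((by fun_prop : Continuous fun v : ℂ => ‖1 - conj v * z‖ ^ 2).tendsto σ).comp
        (hw.mono_right nhdsWithin_le_nhds)))
    ((hw.eventually self_mem_nhdsWithin).mono fun _ hn =>
      schwarz_pick_quotient hf (mem_ball_zero_iff.1 hn) hz)

theorem NTLim.tendsto_radial {f : ℂ → ℂ} {σ c : ℂ} (h : NTLim f σ c) (hσ : ‖σ‖ = 1) :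
    Tendsto (fun r : ℝ => f (r * σ)) (𝓝[<] 1) (𝓝 c) := by
  refine (h 2 one_lt_two).comp (tendsto_nhdsWithin_iff.2 ⟨?_, ?_⟩)
  · simpa using ((by fun_prop : Continuous fun r : ℝ => (r : ℂ) * σ).tendsto 1).mono_left
      (nhdsWithin_le_nhds (s := Iio (1 : ℝ)))
  · filter_upwards [Ioo_mem_nhdsLT one_pos] with r hr
    have hr1 : ‖(r : ℂ) * σ‖ = r := by
      rw [norm_mul, norm_real, Real.norm_of_nonneg hr.1.le, hσ, mul_one]
    refine ⟨by rw [hr1]; exact hr.2, ?_⟩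
    rw [hr1, show σ - r * σ = ((1 - r : ℝ) : ℂ) * σ by push_cast; ring, norm_mul, norm_real,
      Real.norm_of_nonneg (by linarith [hr.2]), hσ, mul_one, div_self (by linarith [hr.2])]
    norm_num

theorem eq_of_julia_of_tendsto_radial {f : ℂ → ℂ} (hf : HolSelfDisk f) {σ η c : ℂ} {β : ℝ}
    (hσ : ‖σ‖ = 1) (hc : ‖c‖ = 1)
    (hJ : ∀ z : ℂ, ‖z‖ < 1 →
      (1 - ‖z‖ ^ 2) * ‖1 - conj η * f z‖ ^ 2 ≤ (1 - ‖f z‖ ^ 2) * β * ‖1 - conj σ * z‖ ^ 2)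
    (hrad : Tendsto (fun r : ℝ => f (r * σ)) (𝓝[<] 1) (𝓝 c)) : η = c := by
  have hβ : 0 ≤ β := by
    have h := hJ 0 (by simp)
    have ha := hf.norm_lt_one (z := 0) (by simp)
    have ha2 : 0 < 1 - ‖f 0‖ ^ 2 := by nlinarith [norm_nonneg (f 0)]
    norm_num at h
    nlinarith [sq_nonneg ‖1 - conj η * f 0‖]
  -- on the radius `|1 - σ̄ z| = 1 - |z|`, so Julia's inequality squeezes `f (r σ)` towards `η`
  have hbound : ∀ r ∈ Ioo (0 : ℝ) 1,
      ‖1 - conj η * f (r * σ)‖ ^ 2 ≤ β * (1 - r) := by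
    intro r hr
    have hr1 : ‖(r : ℂ) * σ‖ = r := by
      rw [norm_mul, norm_real, Real.norm_of_nonneg hr.1.le, hσ, mul_one]
    have hD : ‖1 - conj σ * (r * σ)‖ = 1 - r := by
      rw [mul_left_comm, conj_mul_self_of_norm_eq_one hσ, mul_one, ← ofReal_one, ← ofReal_sub,
        norm_real, Real.norm_of_nonneg (by linarith [hr.2])]
    have h := hJ _ (hr1.trans_lt hr.2)
    rw [hr1, hD] at h
    have hf1 := hf.norm_lt_one (hr1.trans_lt hr.2)
    have h' : (1 - r) * ‖1 - conj η * f (r * σ)‖ ^ 2 ≤ (1 - r) * (β * (1 - r)) := by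
      nlinarith [mul_nonneg (sq_nonneg ‖f (r * σ)‖) (mul_nonneg hβ (sq_nonneg (1 - r))),
        mul_nonneg (mul_nonneg hr.1.le (sub_nonneg.2 hr.2.le)) (sq_nonneg ‖1 - conj η * f (r * σ)‖)]
    exact le_of_mul_le_mul_left h' (by linarith [hr.2])
  have hlim := le_of_tendsto_of_tendsto
    (((by fun_prop : Continuous fun v : ℂ => ‖1 - conj η * v‖ ^ 2).tendsto c).comp hrad)
    (((by fun_prop : Continuous fun r : ℝ => β * (1 - r)).tendsto 1).mono_left
      nhdsWithin_le_nhds)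
    (eventually_of_mem (Ioo_mem_nhdsLT one_pos) hbound)
  rw [sub_self, mul_zero, _root_.sq_nonpos_iff, norm_eq_zero, sub_eq_zero] at hlim
  have hc0 : c ≠ 0 := norm_ne_zero_iff.1 (hc ▸ one_ne_zero)
  exact (starRingEnd ℂ).injective
    (mul_right_cancel₀ hc0 (hlim.symm.trans (conj_mul_self_of_norm_eq_one hc).symm))

theorem le_of_tendsto_dilation {f : ℂ → ℂ} (hf : HolSelfDisk f) {w : ℕ → ℂ} {σ b : ℂ} {β : ℝ}
    (hσ : ‖σ‖ = 1) (hb : ‖b‖ = 1) (hw : Tendsto w atTop (𝓝[ball 0 1] σ))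
    (hfw : Tendsto (f ∘ w) atTop (𝓝 b))
    (hQ : Tendsto (fun n => (1 - ‖f (w n)‖ ^ 2) / (1 - ‖w n‖ ^ 2)) atTop (𝓝 β)) :
    2 / (1 + ‖hdq f 0 0‖) * (‖b - f 0‖ ^ 2 / (1 - ‖f 0‖ ^ 2)) ≤ β := by
  set c := ‖hdq f 0 0‖
  have hr : Tendsto (fun n => ‖w n‖) atTop (𝓝 1) := by
    simpa [hσ] using (hw.mono_right nhdsWithin_le_nhds).norm
  have hcr : Tendsto (fun n => 1 + c * ‖w n‖) atTop (𝓝 (1 + c * 1)) :=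
    tendsto_const_nhds.add (tendsto_const_nhds.mul hr)
  have hlim : Tendsto (fun n => (1 + 2 * c * ‖w n‖ + ‖w n‖ ^ 2) / (1 + c * ‖w n‖) ^ 2
      * (‖1 - conj (f 0) * f (w n)‖ ^ 2 / (1 - ‖f 0‖ ^ 2))) atTop
      (𝓝 ((1 + 2 * c * 1 + 1 ^ 2) / (1 + c * 1) ^ 2
        * (‖1 - conj (f 0) * b‖ ^ 2 / (1 - ‖f 0‖ ^ 2)))) :=
    (((tendsto_const_nhds.add (tendsto_const_nhds.mul hr)).add (hr.pow 2)).div (hcr.pow 2)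
      (by positivity)).mul
      (((tendsto_const_nhds.sub (tendsto_const_nhds.mul hfw)).norm.pow 2).div_const _)
  have hval : (1 + 2 * c * 1 + 1 ^ 2) / (1 + c * 1) ^ 2
        * (‖1 - conj (f 0) * b‖ ^ 2 / (1 - ‖f 0‖ ^ 2))
      = 2 / (1 + c) * (‖b - f 0‖ ^ 2 / (1 - ‖f 0‖ ^ 2)) := by
    rw [norm_one_sub_conj_mul_of_norm_eq_one _ hb]
    have : (1 + c) ≠ 0 := by positivity
    field_simp
    ring
  rw [← hval]
  exact le_of_tendsto_of_tendsto hlim hQ ((hw.eventually self_mem_nhdsWithin).mono fun _ hn =>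
    dilation_lower_bound hf (mem_ball_zero_iff.1 hn))

theorem one_sub_div_one_add_le_norm_sub_sq_div {a b : ℂ} (ha : ‖a‖ < 1) (hb : ‖b‖ = 1) :
    (1 - ‖a‖) / (1 + ‖a‖) ≤ ‖b - a‖ ^ 2 / (1 - ‖a‖ ^ 2) := by
  have h : 1 - ‖a‖ ≤ ‖b - a‖ := hb ▸ norm_sub_norm_le b a
  have ha0 := norm_nonneg a
  rw [div_le_div_iff₀ (by linarith) (by nlinarith)]
  nlinarith [pow_le_pow_left₀ (by linarith) h 2]

/-- Lower bound for the boundary dilation coefficient in terms of the hyperbolic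
derivative at the origin. -/
theorem stmt7 (f : ℂ → ℂ) (σ fσ : ℂ) (β : ℝ) (hf : HolSelfDisk f)
    (hσ : ‖σ‖ = 1) (hβ : betaE f σ = (β : EReal))
    (hfσ : ‖fσ‖ = 1) (hlim : NTLim f σ fσ) :
    β ≥ 2 / (1 + ‖deriv f 0 / ((1 - ‖f 0‖ ^ 2 : ℝ) : ℂ)‖) *
        (‖fσ - f 0‖ ^ 2 / (1 - ‖f 0‖ ^ 2)) ∧
    2 / (1 + ‖deriv f 0 / ((1 - ‖f 0‖ ^ 2 : ℝ) : ℂ)‖) *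
        (‖fσ - f 0‖ ^ 2 / (1 - ‖f 0‖ ^ 2)) ≥
      2 / (1 + ‖deriv f 0 / ((1 - ‖f 0‖ ^ 2 : ℝ) : ℂ)‖) *
        ((1 - ‖f 0‖) / (1 + ‖f 0‖)) := by
  have hhdq : deriv f 0 / ((1 - ‖f 0‖ ^ 2 : ℝ) : ℂ) = hdq f 0 0 := by simp [hdq]
  rw [hhdq]
  refine ⟨?_, mul_le_mul_of_nonneg_left
    (one_sub_div_one_add_le_norm_sub_sq_div (hf.norm_lt_one (by simp)) hfσ) (by positivity)⟩
  obtain ⟨w, η, hw, hfw, hQ⟩ := exists_seq_of_betaE_eq hf hσ hβ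
  have hη : η = fσ := eq_of_julia_of_tendsto_radial hf hσ hfσ
    (fun _ hz => julia_inequality hf hw hfw hQ hz) (hlim.tendsto_radial hσ)
  exact le_of_tendsto_dilation hf hσ hfσ hw (hη ▸ hfw) hQ
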